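/- Let G = S₃ and y₁, y₂, y₃ be the irreducible factors of the group determinant (y₃ of degree 2). Then the invariant ring {f ∈ ℂ[y₁,y₂,y₃] : D_{(123)} f = 0} equals ℂ[y₁y₃, y₂y₃], and {f ∈ ℂ[y₁,y₂,y₃] : D_{(12)} f = 0} equals ℂ[y₁y₂, y₃]. -/

import Mathlib

/-!
Each `D_g` is a derivation of `ℂ[x_h]`, and `y₁, y₂, y₃` are eigenvectors of it:
`D_g y₁ = y₁`, `D_g y₂ = sgn(g) y₂` and `D_g y₃ = tr φ₃(g) y₃`, the last because `D_g` multiplies the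
matrix `∑ φ₃(h) x_h` on the left by `φ₃(g)`, and the derivative of a determinant along `X ↦ B X` is
`tr B · det X`. So every monomial `y^α` is an eigenvector, with eigenvalue the `α`-weighted sum of
these, and since eigenvectors of distinct eigenvalues are linearly independent, the kernel of `D_g`
on `ℂ[y₁, y₂, y₃]` is spanned by the monomials of weight zero. The weights are `(1, 1, -1)` for `(123)` and `(1, -1, 0)` for `(12)`, and the
weight-zero monomials are the products of powers of `y₁y₃, y₂y₃`, respectively of `y₁y₂, y₃`.
-/

open MvPolynomial Equiv

/-- The Frobenius differential operator `D_g f = ∑_{h ∈ G} x_{g⁻¹ h} ∂f/∂x_h`. -/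
noncomputable def Dop {G : Type*} [Group G] [Fintype G] [DecidableEq G] (g : G)
    (f : MvPolynomial G ℂ) : MvPolynomial G ℂ :=
  ∑ h : G, X (g⁻¹ * h) * pderiv h f

/-- The matrix `X = ∑_{h ∈ G} φ(h) x_h` with entries in the polynomial ring. -/
noncomputable def repMatrix {G : Type*} [Group G] [Fintype G] [DecidableEq G] {d : ℕ}
    (φ : G →* Matrix (Fin d) (Fin d) ℂ) : Matrix (Fin d) (Fin d) (MvPolynomial G ℂ) :=
  ∑ h : G, (X h : MvPolynomial G ℂ) • (φ h).map C

namespace Derivation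

section CommRing

variable {K A : Type*} [CommRing K] [CommRing A] [Algebra K A] (D : Derivation K A A)

theorem apply_mul_of_apply_eq_smul {x y : A} {μ ν : K} (hx : D x = μ • x) (hy : D y = ν • y) :
    D (x * y) = (μ + ν) • (x * y) := by
  rw [leibniz, hx, hy, smul_eq_mul, smul_eq_mul, mul_smul_comm, mul_smul_comm, add_smul,
    mul_comm y, add_comm]

theorem apply_pow_of_apply_eq_smul {x : A} {μ : K} (hx : D x = μ • x) (n : ℕ) :
    D (x ^ n) = (n * μ) • x ^ n := by
  induction n with
  | zero => simp
  | succ n ih => rw [pow_succ, D.apply_mul_of_apply_eq_smul ih hx]; push_cast; ring_nf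

theorem apply_prod_pow_of_apply_eq_smul {ι : Type*} {Y : ι → A} {e : ι → K}
    (hY : ∀ i, D (Y i) = e i • Y i) (α : ι → ℕ) (s : Finset ι) :
    D (∏ i ∈ s, Y i ^ α i) = (∑ i ∈ s, (α i : K) * e i) • ∏ i ∈ s, Y i ^ α i := by
  classical
  induction s using Finset.induction_on with
  | empty => simp
  | insert i s hi ih =>
    rw [Finset.prod_insert hi, Finset.sum_insert hi,
      D.apply_mul_of_apply_eq_smul (D.apply_pow_of_apply_eq_smul (hY i) _) ih]

theorem apply_eq_zero_of_mem_adjoin {s : Set A} (hs : ∀ x ∈ s, D x = 0) {f : A}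
    (hf : f ∈ Algebra.adjoin K s) : D f = 0 := by
  induction hf using Algebra.adjoin_induction with
  | mem x hx => exact hs x hx
  | algebraMap r => exact D.map_algebraMap r
  | add x y _ _ hx hy => rw [map_add, hx, hy, add_zero]
  | mul x y _ _ hx hy => rw [leibniz, hx, hy, smul_zero, smul_zero, add_zero]

theorem apply_det_fin_two {M B : Matrix (Fin 2) (Fin 2) A} (h : M.map D = B * M) :
    D M.det = B.trace * M.det := by
  have hM : ∀ i j, D (M i j) = B i 0 * M 0 j + B i 1 * M 1 j := fun i j => by
    simpa [Matrix.mul_apply] using congrFun₂ h i j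
  rw [Matrix.det_fin_two, Matrix.trace_fin_two, map_sub, leibniz, leibniz,
    hM, hM, hM, hM, smul_eq_mul, smul_eq_mul, smul_eq_mul, smul_eq_mul]
  ring

end CommRing

section Field

variable {K A : Type*} [Field K] [CommRing A] [Algebra K A] (D : Derivation K A A)

theorem mem_span_of_apply_eq_zero {ι : Type*} [Fintype ι] {Y : ι → A} {e : ι → K}
    (hY : ∀ i, D (Y i) = e i • Y i) {f : A} (hf : f ∈ Algebra.adjoin K (Set.range Y))
    (hDf : D f = 0) :
    f ∈ Submodule.span K
      ((fun α : ι →₀ ℕ => ∏ i, Y i ^ α i) '' {α | ∑ i, (α i : K) * e i = 0}) := by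
  classical
  obtain ⟨p, rfl⟩ := (AlgHom.mem_range _).mp (Algebra.adjoin_range_eq_range_aeval K Y ▸ hf)
  set M : (ι →₀ ℕ) → A := fun α => ∏ i, Y i ^ α i
  set w : (ι →₀ ℕ) → K := fun α => ∑ i, (α i : K) * e i
  have hM : ∀ α, M α ∈ Module.End.eigenspace (D : Module.End K A) (w α) := fun α =>
    Module.End.mem_eigenspace_iff.mpr (D.apply_prod_pow_of_apply_eq_smul hY α _)
  have hp : aeval Y p = ∑ α ∈ p.support, p.coeff α • M α := by
    conv_lhs => rw [p.as_sum]
    simp only [map_sum, aeval_monomial, Finsupp.prod_fintype _ _ (fun i => pow_zero (Y i)),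
      Algebra.smul_def, M]
  rw [hp, ← Finset.sum_filter_add_sum_filter_not p.support (fun α => w α = 0)] at hDf ⊢
  set f₀ := ∑ α ∈ p.support with w α = 0, p.coeff α • M α
  set f₁ := ∑ α ∈ p.support with ¬ w α = 0, p.coeff α • M α
  have hf₀ : f₀ ∈ Submodule.span K (M '' {α | w α = 0}) :=
    Submodule.sum_mem _ fun α hα => Submodule.smul_mem _ _
      (Submodule.subset_span ⟨α, (Finset.mem_filter.mp hα).2, rfl⟩)
  have hf₁ : f₁ = 0 := by
    have h₀ : f₀ ∈ Module.End.eigenspace (D : Module.End K A) 0 :=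
      Submodule.sum_mem _ fun α hα => Submodule.smul_mem _ _
        ((Finset.mem_filter.mp hα).2 ▸ hM α)
    have h₁ : f₁ ∈ Module.End.eigenspace (D : Module.End K A) 0 := by
      rw [← add_sub_cancel_left f₀ f₁]
      refine Submodule.sub_mem _ (Module.End.mem_eigenspace_iff.mpr ?_) h₀
      rw [zero_smul]
      exact hDf
    have h₂ : f₁ ∈ ⨆ (μ : K) (_ : μ ≠ 0), Module.End.eigenspace (D : Module.End K A) μ :=
      Submodule.sum_mem _ fun α hα => Submodule.smul_mem _ _ <|
        Submodule.mem_iSup_of_mem (w α) <|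
          Submodule.mem_iSup_of_mem (Finset.mem_filter.mp hα).2 (hM α)
    exact Submodule.disjoint_def.mp
      (Module.End.eigenspaces_iSupIndep (D : Module.End K A) 0) _ h₁ h₂
  rw [hf₁, add_zero]
  exact hf₀

theorem mem_of_apply_eq_zero_of_mem_adjoin_three {y₁ y₂ y₃ : A} {μ₁ μ₂ μ₃ : K}
    (h₁ : D y₁ = μ₁ • y₁) (h₂ : D y₂ = μ₂ • y₂) (h₃ : D y₃ = μ₃ • y₃) {S : Subalgebra K A}
    (hS : ∀ a b c : ℕ, a * μ₁ + b * μ₂ + c * μ₃ = 0 → y₁ ^ a * y₂ ^ b * y₃ ^ c ∈ S) {f : A}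
    (hf : f ∈ Algebra.adjoin K {y₁, y₂, y₃}) (hDf : D f = 0) : f ∈ S := by
  have hY : ∀ i, D (![y₁, y₂, y₃] i) = ![μ₁, μ₂, μ₃] i • ![y₁, y₂, y₃] i := by
    simp [Fin.forall_fin_succ, h₁, h₂, h₃]
  have hrange : Set.range ![y₁, y₂, y₃] = {y₁, y₂, y₃} := by
    rw [Matrix.range_cons, Matrix.range_cons_cons_empty, Set.singleton_union]
  refine (Submodule.span_le (p := Subalgebra.toSubmodule S)).mpr ?_
    (D.mem_span_of_apply_eq_zero hY (hrange ▸ hf) hDf)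
  rintro _ ⟨α, hα, rfl⟩
  simp only [Set.mem_ofPred_eq, Fin.sum_univ_three, Fin.prod_univ_three] at hα ⊢
  exact hS _ _ _ hα

variable [CharZero K] {y₁ y₂ y₃ : A}

theorem apply_eq_zero_iff_mem_adjoin_of_eigen_one_one_neg_one (h₁ : D y₁ = y₁) (h₂ : D y₂ = y₂)
    (h₃ : D y₃ = -y₃) :
    ∀ f ∈ Algebra.adjoin K {y₁, y₂, y₃}, D f = 0 ↔ f ∈ Algebra.adjoin K {y₁ * y₃, y₂ * y₃} := by
  refine fun f hf => ⟨fun hDf => ?_, fun hf' => D.apply_eq_zero_of_mem_adjoin ?_ hf'⟩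
  · refine D.mem_of_apply_eq_zero_of_mem_adjoin_three (μ₁ := 1) (μ₂ := 1) (μ₃ := -1)
      (by rw [h₁, one_smul]) (by rw [h₂, one_smul]) (by rw [h₃, neg_one_smul]) ?_ hf hDf
    intro a b c habc
    obtain rfl : c = a + b := by exact_mod_cast (by linear_combination -habc : (c : K) = a + b)
    rw [pow_add, show y₁ ^ a * y₂ ^ b * (y₃ ^ a * y₃ ^ b) = (y₁ * y₃) ^ a * (y₂ * y₃) ^ b by ring]
    exact mul_mem (pow_mem (Algebra.subset_adjoin (by simp)) _)
      (pow_mem (Algebra.subset_adjoin (by simp)) _)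
  · rintro _ (rfl | rfl)
    · rw [leibniz, h₁, h₃, smul_eq_mul, smul_eq_mul]; ring
    · rw [leibniz, h₂, h₃, smul_eq_mul, smul_eq_mul]; ring

theorem apply_eq_zero_iff_mem_adjoin_of_eigen_one_neg_one_zero (h₁ : D y₁ = y₁) (h₂ : D y₂ = -y₂)
    (h₃ : D y₃ = 0) :
    ∀ f ∈ Algebra.adjoin K {y₁, y₂, y₃}, D f = 0 ↔ f ∈ Algebra.adjoin K {y₁ * y₂, y₃} := by
  refine fun f hf => ⟨fun hDf => ?_, fun hf' => D.apply_eq_zero_of_mem_adjoin ?_ hf'⟩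
  · refine D.mem_of_apply_eq_zero_of_mem_adjoin_three (μ₁ := 1) (μ₂ := -1) (μ₃ := 0)
      (by rw [h₁, one_smul]) (by rw [h₂, neg_one_smul]) (by rw [h₃, zero_smul]) ?_ hf hDf
    intro a b c hab
    obtain rfl : b = a := by exact_mod_cast (by linear_combination -hab : (b : K) = a)
    rw [← mul_pow]
    exact mul_mem (pow_mem (Algebra.subset_adjoin (by simp)) _)
      (pow_mem (Algebra.subset_adjoin (by simp)) _)
  · rintro _ (rfl | rfl)
    · rw [leibniz, h₁, h₂, smul_eq_mul, smul_eq_mul]; ring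
    · exact h₃

end Field

end Derivation

section Dop

variable {G : Type*} [Group G] [Fintype G] [DecidableEq G]

noncomputable def Dop.derivation (g : G) : Derivation ℂ (MvPolynomial G ℂ) (MvPolynomial G ℂ) :=
  ∑ h, (X (g⁻¹ * h) : MvPolynomial G ℂ) • pderiv h

@[simp]
theorem Dop.coe_derivation (g : G) : ⇑(Dop.derivation g) = Dop g := by
  ext f
  rw [Dop.derivation, ← Derivation.coeFnAddMonoidHom_apply, map_sum, Finset.sum_apply]
  rfl

theorem Dop_sum_C_mul_X (g : G) (c : G → ℂ) :
    Dop g (∑ h, C (c h) * X h) = ∑ h, C (c (g * h)) * X h := by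
  simp only [Dop, map_sum, pderiv_C_mul, pderiv_X, Pi.single_apply, mul_ite, mul_one, mul_zero,
    Finset.sum_ite_eq', Finset.mem_univ, if_true]
  exact Fintype.sum_equiv (Equiv.mulLeft g⁻¹) _ _ fun h => by simp [mul_comm]

theorem Dop_sum_C_mul_X_of_monoidHom (g : G) (χ : G →* ℂ) :
    Dop g (∑ h, C (χ h) * X h) = C (χ g) * ∑ h, C (χ h) * X h := by
  simp only [Dop_sum_C_mul_X, map_mul, Finset.mul_sum, mul_assoc]

theorem repMatrix_apply {d : ℕ} (φ : G →* Matrix (Fin d) (Fin d) ℂ) (i j : Fin d) :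
    repMatrix φ i j = ∑ h, C (φ h i j) * X h := by
  simp [repMatrix, Matrix.sum_apply, mul_comm]

theorem repMatrix_map_Dop {d : ℕ} (φ : G →* Matrix (Fin d) (Fin d) ℂ) (g : G) :
    (repMatrix φ).map (Dop g) = (φ g).map C * repMatrix φ := by
  ext i j
  simp only [Matrix.map_apply, repMatrix_apply, Dop_sum_C_mul_X, map_mul, Matrix.mul_apply,
    Finset.mul_sum, map_sum, Finset.sum_mul]
  rw [Finset.sum_comm]
  simp only [mul_assoc]

theorem Dop_det_repMatrix_fin_two (φ : G →* Matrix (Fin 2) (Fin 2) ℂ) (g : G) :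
    Dop g (repMatrix φ).det = C (φ g).trace * (repMatrix φ).det := by
  rw [← Dop.coe_derivation, Derivation.apply_det_fin_two _ (B := (φ g).map C)]
  · rw [← AddMonoidHom.map_trace]
  · simpa only [Dop.coe_derivation] using repMatrix_map_Dop φ g

end Dop

/-- First fundamental theorems for `S₃`:
`ℂ[y]^{D_{(123)}} = ℂ[y₁y₃, y₂y₃]` and `ℂ[y]^{D_{(12)}} = ℂ[y₁y₂, y₃]`. -/
theorem invariant_rings_S3
    (φ₃ : Perm (Fin 3) →* Matrix (Fin 2) (Fin 2) ℂ)
    (hc : (φ₃ (swap 0 2 * swap 0 1)).trace = -1)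
    (ht : (φ₃ (swap 0 1)).trace = 0)
    (y₁ y₂ y₃ : MvPolynomial (Perm (Fin 3)) ℂ)
    (hy₁ : y₁ = ∑ h : Perm (Fin 3), X h)
    (hy₂ : y₂ = ∑ h : Perm (Fin 3), C (((Perm.sign h : ℤ) : ℂ)) * X h)
    (hy₃ : y₃ = (repMatrix φ₃).det) :
    ∀ f ∈ Algebra.adjoin ℂ {y₁, y₂, y₃},
      (Dop (swap 0 2 * swap 0 1) f = 0 ↔ f ∈ Algebra.adjoin ℂ {y₁ * y₃, y₂ * y₃}) ∧
        (Dop (swap 0 1) f = 0 ↔ f ∈ Algebra.adjoin ℂ {y₁ * y₂, y₃}) := by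
  have h₁ (g) : Dop g y₁ = y₁ := by simpa [hy₁] using Dop_sum_C_mul_X_of_monoidHom g 1
  have h₂ (g) : Dop g y₂ = C ((Perm.sign g : ℤ) : ℂ) * y₂ := by
    rw [hy₂]
    exact Dop_sum_C_mul_X_of_monoidHom g
      ((Units.coeHom ℂ).comp ((Units.map (Int.castRingHom ℂ).toMonoidHom).comp Perm.sign))
  have h₃ (g) : Dop g y₃ = C (φ₃ g).trace * y₃ := by rw [hy₃, Dop_det_repMatrix_fin_two]
  have hsign_c : Perm.sign (swap 0 2 * swap 0 1 : Perm (Fin 3)) = 1 := by decide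
  have hsign_t : Perm.sign (swap 0 1 : Perm (Fin 3)) = -1 := by decide
  simp only [← Dop.coe_derivation] at h₁ h₂ h₃ ⊢
  exact fun f hf =>
    ⟨Derivation.apply_eq_zero_iff_mem_adjoin_of_eigen_one_one_neg_one _ (h₁ _)
        (by rw [h₂, hsign_c]; simp) (by rw [h₃, hc]; simp) f hf,
      Derivation.apply_eq_zero_iff_mem_adjoin_of_eigen_one_neg_one_zero _ (h₁ _)
        (by rw [h₂, hsign_t]; simp) (by rw [h₃, ht]; simp) f hf⟩
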